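/- arXiv:1404.0977 — 6 statements merged into one kernel-verified Lean document; each statement's English description precedes it below -/
import Mathlib

section
/- Let M be an m×n Monge matrix of real numbers. For each column k (1 ≤ k ≤ n) let r(k) denote the smallest row index i achieving the minimum of M over column k, i.e. the least i with M_{ik} = min_{1≤i'≤m} M_{i'k}. Then r is monotone non-increasing in the column index: for all columns k ≤ k', r(k') ≤ r(k). (Consequently the upper envelope of the rows of M, given by the values r(1), …, r(n), is a monotone step function.) -/
/-- An `m × n` real matrix `M` is *Monge* if for every pair of rows `i < j`
and every pair of columns `k < l` one has `M i k + M j l ≥ M i l + M j k`. -/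
def IsMonge {m n : ℕ} (M : Fin m → Fin n → ℝ) : Prop :=
  ∀ i j : Fin m, ∀ k l : Fin n, i < j → k < l →
    M i l + M j k ≤ M i k + M j l

/-- For a Monge matrix, the least row index `r k` achieving the minimum of
column `k` is monotone non-increasing in the column index. -/
theorem column_minima_row_antitone {m n : ℕ} (M : Fin m → Fin n → ℝ)
    (hM : IsMonge M) (r : Fin n → Fin m)
    (hr : ∀ k : Fin n,
      IsLeast {i : Fin m | ∀ i' : Fin m, M i k ≤ M i' k} (r k)) :
    ∀ k k' : Fin n, k ≤ k' → r k' ≤ r k := by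
  intro k k' hkk'
  rcases eq_or_lt_of_le hkk' with rfl | hlt
  · exact le_refl _
  by_contra h
  push_neg at h
  -- h : r k < r k'
  set i := r k with hi
  set j := r k' with hj
  have hmin_k : ∀ i', M i k ≤ M i' k := (hr k).1
  have hmin_k' : ∀ i', M j k' ≤ M i' k' := (hr k').1
  -- i is not a minimizer of column k', else r k' ≤ i
  have hstrict : M j k' < M i k' := by
    rcases lt_or_ge (M j k') (M i k') with h1 | h1
    · exact h1
    · have hmem : i ∈ {i : Fin m | ∀ i' : Fin m, M i k' ≤ M i' k'} := by
        intro i'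
        exact le_trans h1 (hmin_k' i')
      exact absurd ((hr k').2 hmem) (not_le.mpr h)
  have hmonge := hM i j k k' h hlt
  have h2 : M i k + M j k' < M i k' + M j k := by
    have := hmin_k j
    linarith
  linarith
end

section
/- Let M be an m×n Monge matrix of real numbers, and for each column k let r(k) denote the smallest row index achieving the minimum of M over column k. Then the number of breakpoints, i.e. the number of columns k with 1 ≤ k ≤ n−1 such that r(k) ≠ r(k+1), is at most m − 1. (Hence the upper envelope of the rows of M can be represented by at most m breakpoints.) -/
lemma monge_r_antitone {m n : ℕ} (M : Fin m → Fin n → ℝ)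
    (hM : IsMonge M) (r : Fin n → Fin m)
    (hr : ∀ k : Fin n,
      IsLeast {i : Fin m | ∀ i' : Fin m, M i k ≤ M i' k} (r k)) :
    ∀ k l : Fin n, k < l → r l ≤ r k := by
  intro k l hkl
  by_contra hlt
  push_neg at hlt
  have h1 : M (r k) k ≤ M (r l) k := (hr k).1 (r l)
  have h2 : M (r l) l ≤ M (r k) l := (hr l).1 (r k)
  have h3 : M (r k) l + M (r l) k ≤ M (r k) k + M (r l) l :=
    hM (r k) (r l) k l hlt hkl
  have heq : M (r k) l = M (r l) l := by linarith
  have hmem : r k ∈ {i : Fin m | ∀ i' : Fin m, M i l ≤ M i' l} := by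
    intro i'
    rw [heq]
    exact (hr l).1 i'
  exact absurd ((hr l).2 hmem) (not_le.mpr hlt)

/-- For a Monge matrix, the number of breakpoints of the upper envelope of its
rows (columns `k` with `r k ≠ r (k+1)`, where `r k` is the least row index
achieving the column minimum of column `k`) is at most `m - 1`. -/
theorem number_of_breakpoints_le {m n : ℕ} (M : Fin m → Fin n → ℝ)
    (hM : IsMonge M) (r : Fin n → Fin m)
    (hr : ∀ k : Fin n,
      IsLeast {i : Fin m | ∀ i' : Fin m, M i k ≤ M i' k} (r k)) :
    {k : Fin n | ∃ h : (k : ℕ) + 1 < n, r ⟨(k : ℕ) + 1, h⟩ ≠ r k}.ncard ≤ m - 1 := by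
  have anti := monge_r_antitone M hM r hr
  set S := {k : Fin n | ∃ h : (k : ℕ) + 1 < n, r ⟨(k : ℕ) + 1, h⟩ ≠ r k} with hS
  -- at each breakpoint the value strictly drops
  have hdrop : ∀ k ∈ S, ∀ h : (k : ℕ) + 1 < n, r ⟨(k : ℕ) + 1, h⟩ < r k := by
    intro k hk h
    obtain ⟨h', hne⟩ := hk
    exact lt_of_le_of_ne (anti k ⟨(k : ℕ) + 1, h⟩ (by simp [Fin.lt_def])) hne
  -- the map k ↦ (r k : ℕ) is strictly decreasing across breakpoints
  have hinj : Set.InjOn (fun k : Fin n => (r k : ℕ)) S := by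
    have key : ∀ k ∈ S, ∀ k' ∈ S, k < k' → r k' < r k := by
      intro k hk k' _ hlt
      obtain ⟨h, -⟩ := id hk
      have hstep : r ⟨(k : ℕ) + 1, h⟩ < r k := hdrop k hk h
      rcases eq_or_lt_of_le (show (⟨(k : ℕ) + 1, h⟩ : Fin n) ≤ k' from
        Fin.mk_le_of_le_val (Nat.succ_le_of_lt hlt)) with heq | hlt'
      · rwa [← heq]
      · exact lt_of_le_of_lt (anti _ _ hlt') hstep
    intro k hk k' hk' hrr
    by_contra hne
    rcases lt_or_gt_of_ne hne with h | h
    · exact absurd hrr (Fin.lt_def.mp (key k hk k' hk' h)).ne'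
    · exact absurd hrr (Fin.lt_def.mp (key k' hk' k hk h)).ne
  -- image lies in Icc 1 (m-1)
  have hsub : (fun k : Fin n => (r k : ℕ)) '' S ⊆ Set.Icc 1 (m - 1) := by
    rintro x ⟨k, hk, rfl⟩
    obtain ⟨h, -⟩ := id hk
    have h1 : (0 : ℕ) < (r k : ℕ) :=
      lt_of_le_of_lt (Nat.zero_le _) (hdrop k hk h)
    exact ⟨h1, Nat.le_sub_one_of_lt (r k).isLt⟩
  calc S.ncard = ((fun k : Fin n => (r k : ℕ)) '' S).ncard :=
        (Set.ncard_image_of_injOn hinj).symm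
    _ ≤ (Set.Icc 1 (m - 1)).ncard := Set.ncard_le_ncard hsub (Set.toFinite _)
    _ = m - 1 := by
        rw [Set.ncard_eq_toFinset_card', Set.toFinset_Icc, Nat.card_Icc]
        omega
end

section
/- Let M be an m×n Monge matrix of real numbers and let t be a row index with 1 ≤ t < m. For each column k define f(k) = min_{i ≤ t} M_{ik} (the minimum over the block of lower-indexed rows) and g(k) = min_{i > t} M_{ik} (the minimum over the block of higher-indexed rows). If f(k) ≤ g(k) for some column k, then f(ℓ) ≤ g(ℓ) for every column ℓ ≥ k. (Equivalently, when the rows of M are split into a lower block and an upper block, there is at most one transition column: the columns where the higher-indexed block strictly wins form a prefix and the columns where the lower-indexed block weakly wins form a suffix of the column range.) -/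
/-- Split the rows of a Monge matrix at row `t` into a lower block (rows `≤ t`)
and an upper block (rows `> t`), and let `f k` (resp. `g k`) be the minimum of
column `k` over the lower (resp. upper) block.  If `f k ≤ g k` at some column
`k`, then `f l ≤ g l` at every column `l ≥ k`: there is at most one
transition column. -/
theorem block_minima_single_transition {m n : ℕ} (M : Fin m → Fin n → ℝ)
    (hM : IsMonge M) (t : Fin m) (f g : Fin n → ℝ)
    (hf : ∀ k : Fin n, IsLeast ((fun i => M i k) '' {i : Fin m | i ≤ t}) (f k))
    (hg : ∀ k : Fin n, IsLeast ((fun i => M i k) '' {i : Fin m | t < i}) (g k)) :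
    ∀ k l : Fin n, k ≤ l → f k ≤ g k → f l ≤ g l := by
  intro k l hkl hk
  rcases eq_or_lt_of_le hkl with rfl | hkl
  · exact hk
  -- pick i ≤ t attaining f k
  obtain ⟨i, hi, hik⟩ := (hf k).1
  -- pick j > t attaining g l
  obtain ⟨j, hj, hjl⟩ := (hg l).1
  have hij : i < j := lt_of_le_of_lt hi hj
  have hm := hM i j k l hij hkl
  have h1 : g k ≤ M j k := (hg k).2 ⟨j, hj, rfl⟩
  have h2 : f l ≤ M i l := (hf l).2 ⟨i, hi, rfl⟩
  have h3 : M i k = f k := hik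
  have h4 : M j l = g l := hjl
  linarith
end

section
/- Let M be an m×n Monge matrix of real numbers and let d : {1,…,m} → ℝ be an arbitrary assignment of labels to the rows. For each column k let p(k) denote the smallest row index i minimizing d(i) + M_{ik}. Then for every row a, the set of columns {k : p(k) = a} is a (possibly empty) set of consecutive columns. Moreover, if row a precedes row a' (a < a'), then every column in the interval of a' precedes every column in the interval of a. (This is the structural fact that each row is the parent of a contiguous interval of columns, and the intervals of distinct parent rows appear in reverse row order.) -/
/-- For a Monge matrix with row labels `d`, let `p k` be the least row index
minimizing `d i + M i k` over column `k` (the "parent" of column `k`).  Then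
the set of columns with a given parent `a` is contiguous, and if `a < a'`
then every column whose parent is `a'` precedes every column whose parent
is `a`. -/
theorem parent_intervals_contiguous_and_reversed {m n : ℕ}
    (M : Fin m → Fin n → ℝ) (hM : IsMonge M) (d : Fin m → ℝ)
    (p : Fin n → Fin m)
    (hp : ∀ k : Fin n,
      IsLeast {i : Fin m | ∀ i' : Fin m, d i + M i k ≤ d i' + M i' k} (p k)) :
    (∀ a : Fin m, ∀ k₁ k₂ k₃ : Fin n, k₁ ≤ k₂ → k₂ ≤ k₃ →
        p k₁ = a → p k₃ = a → p k₂ = a) ∧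
    (∀ a a' : Fin m, a < a' → ∀ k k' : Fin n, p k = a' → p k' = a → k < k') := by
  have anti : ∀ k k' : Fin n, k ≤ k' → p k' ≤ p k := by
    intro k k' hkk'
    rcases eq_or_lt_of_le hkk' with rfl | hlt
    · exact le_rfl
    by_contra h
    push_neg at h
    set i := p k with hi
    set j := p k' with hj
    have hik := (hp k).1
    have hjk := (hp k').1
    have h1 : d i + M i k ≤ d j + M j k := hik j
    have h2 : M i k' + M j k ≤ M i k + M j k' := hM i j k k' h hlt
    have h3 : ∀ i', d i + M i k' ≤ d i' + M i' k' := by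
      intro i'
      have : d i + M i k' ≤ d j + M j k' := by linarith
      exact this.trans (hjk i')
    have := (hp k').2 h3
    exact absurd this (not_le.mpr h)
  constructor
  · intro a k₁ k₂ k₃ h12 h23 h1 h3
    have hA := anti k₁ k₂ h12
    have hB := anti k₂ k₃ h23
    rw [h1] at hA; rw [h3] at hB
    exact le_antisymm hA hB
  · intro a a' haa' k k' hk hk'
    by_contra h
    push_neg at h
    have := anti k' k h
    rw [hk, hk'] at this
    exact absurd haa' (not_lt.mpr this)
end

section
/- There exists a constant C > 0 such that for every real number r ≥ 2 and every positive integer N, with r_i = r^{2^{i−1}}: ∑_{i=1}^{N} i · r_i^{−1/2} (log₂ r_i)² ≤ C · r^{−1/2} (log₂ r)². -/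
/-!
Write `n = 2^k` for the index `i = k + 1`. Then `log₂ r_i = n log₂ r` and
`r_i^{-1/2} = r^{-1/2} · r^{-(n-1)/2} ≤ r^{-1/2} · 2^{-(n-1)/2}` since `r ≥ 2`, so the `i`-th term is
at most `(k+1) n² 2^{-(n-1)/2}` times `r^{-1/2} (log₂ r)²`. Using `k + 1 ≤ 2^k`, this factor is at
most `2^13 · 2^{-(k+1)}` as soon as `4k + 1 - (2^k - 1)/2 ≤ 13`, i.e. `8k ≤ 23 + 2^k`, and the
geometric series sums to at most `2`.
-/

open Finset

/-- The doubly exponentially growing sequence `r_i = r^(2^(i-1))`, so that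
`r_1 = r` and `r_{i+1} = r_i²`. -/
noncomputable def rseq (r : ℝ) (i : ℕ) : ℝ := r ^ 2 ^ (i - 1)

open Real

lemma logb_rseq (r : ℝ) (i : ℕ) : logb 2 (rseq r i) = 2 ^ (i - 1) * logb 2 r := by
  rw [rseq, logb_pow]
  push_cast
  rfl

lemma rseq_rpow_neg_half {r : ℝ} (hr : 0 < r) (i : ℕ) :
    rseq r i ^ (-(1 / 2) : ℝ) = r ^ (-(1 / 2) : ℝ) * r ^ (-((2 : ℝ) ^ (i - 1) - 1) / 2) := by
  rw [rseq, ← rpow_natCast, ← rpow_mul hr.le, ← rpow_add hr]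
  push_cast
  ring_nf

lemma eight_mul_le_two_pow_add (k : ℕ) : 8 * k ≤ 23 + 2 ^ k := by
  induction k with
  | zero => norm_num
  | succ k ih =>
    rcases lt_or_ge k 5 with hk | hk
    · interval_cases k <;> norm_num
    · have : 2 ^ 5 ≤ 2 ^ k := Nat.pow_le_pow_right two_pos hk
      rw [pow_succ]
      omega

lemma succ_mul_sq_two_pow_mul_rpow_le (k : ℕ) :
    (k + 1 : ℝ) * ((2 : ℝ) ^ k) ^ 2 * (2 : ℝ) ^ (-((2 : ℝ) ^ k - 1) / 2) ≤
      2 ^ 13 * (1 / 2) ^ (k + 1) := by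
  have hk : (k + 1 : ℝ) ≤ 2 ^ k := by exact_mod_cast Nat.lt_two_pow_self
  have hexp : (4 * k + 1 : ℝ) + (-((2 : ℝ) ^ k - 1) / 2) ≤ 13 := by
    have : (8 * k : ℝ) ≤ 23 + 2 ^ k := by exact_mod_cast eight_mul_le_two_pow_add k
    linarith
  calc (k + 1 : ℝ) * ((2 : ℝ) ^ k) ^ 2 * (2 : ℝ) ^ (-((2 : ℝ) ^ k - 1) / 2)
      ≤ 2 ^ k * ((2 : ℝ) ^ k) ^ 2 * (2 : ℝ) ^ (-((2 : ℝ) ^ k - 1) / 2) := by gcongr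
    _ = 2 ^ ((4 * k + 1 : ℝ) + (-((2 : ℝ) ^ k - 1) / 2)) * (1 / 2) ^ (k + 1) := by
      have h : (2 : ℝ) ^ (4 * k + 1 : ℝ) = 2 ^ (4 * k + 1) := by
        exact_mod_cast rpow_natCast 2 (4 * k + 1)
      rw [rpow_add two_pos, h, one_div_pow]
      field_simp
      ring
    _ ≤ 2 ^ 13 * (1 / 2) ^ (k + 1) := by
      gcongr
      exact_mod_cast rpow_le_rpow_of_exponent_le one_le_two hexp

lemma succ_mul_rseq_rpow_neg_half_mul_sq_logb_le {r : ℝ} (hr : 2 ≤ r) (k : ℕ) :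
    ((k + 1 : ℕ) : ℝ) * rseq r (k + 1) ^ (-(1 / 2) : ℝ) * logb 2 (rseq r (k + 1)) ^ 2 ≤
      2 ^ 13 * (1 / 2) ^ (k + 1) * (r ^ (-(1 / 2) : ℝ) * logb 2 r ^ 2) := by
  rw [logb_rseq, rseq_rpow_neg_half (by linarith), Nat.add_sub_cancel]
  have hdecay : r ^ (-((2 : ℝ) ^ k - 1) / 2) ≤ 2 ^ (-((2 : ℝ) ^ k - 1) / 2) := by
    have : (1 : ℝ) ≤ 2 ^ k := one_le_pow₀ one_le_two
    exact rpow_le_rpow_of_nonpos two_pos hr (by linarith)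
  calc ((k + 1 : ℕ) : ℝ) * (r ^ (-(1 / 2) : ℝ) * r ^ (-((2 : ℝ) ^ k - 1) / 2)) *
        ((2 : ℝ) ^ k * logb 2 r) ^ 2
      = ((k + 1 : ℝ) * ((2 : ℝ) ^ k) ^ 2 * r ^ (-((2 : ℝ) ^ k - 1) / 2)) *
          (r ^ (-(1 / 2) : ℝ) * logb 2 r ^ 2) := by push_cast; ring
    _ ≤ ((k + 1 : ℝ) * ((2 : ℝ) ^ k) ^ 2 * 2 ^ (-((2 : ℝ) ^ k - 1) / 2)) *
          (r ^ (-(1 / 2) : ℝ) * logb 2 r ^ 2) := by gcongr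
    _ ≤ 2 ^ 13 * (1 / 2) ^ (k + 1) * (r ^ (-(1 / 2) : ℝ) * logb 2 r ^ 2) :=
      mul_le_mul_of_nonneg_right (succ_mul_sq_two_pow_mul_rpow_le k) (by positivity)

/-- The sum `∑_{i=1}^{N} i · r_i^{-1/2} (log₂ r_i)²` over the doubly
exponentially growing sequence `r_i = r^(2^(i-1))` is at most
`C · r^{-1/2} (log₂ r)²` for a universal constant `C`. -/
theorem sum_mul_rpow_neg_half_mul_sq_logb_le :
    ∃ C : ℝ, 0 < C ∧ ∀ r : ℝ, 2 ≤ r → ∀ N : ℕ, 1 ≤ N →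
      ∑ i ∈ Finset.Icc 1 N,
          (i : ℝ) * rseq r i ^ (-(1 / 2) : ℝ) * (Real.logb 2 (rseq r i)) ^ 2 ≤
        C * r ^ (-(1 / 2) : ℝ) * (Real.logb 2 r) ^ 2 := by
  refine ⟨2 ^ 14, by norm_num, fun r hr N _ => ?_⟩
  set B := r ^ (-(1 / 2) : ℝ) * logb 2 r ^ 2
  calc ∑ i ∈ Icc 1 N, (i : ℝ) * rseq r i ^ (-(1 / 2) : ℝ) * logb 2 (rseq r i) ^ 2
      ≤ ∑ i ∈ Icc 1 N, 2 ^ 13 * (1 / 2 : ℝ) ^ i * B := by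
        refine sum_le_sum fun i hi => ?_
        obtain ⟨k, rfl⟩ : ∃ k, i = k + 1 := ⟨i - 1, by grind⟩
        exact succ_mul_rseq_rpow_neg_half_mul_sq_logb_le hr k
    _ = 2 ^ 13 * (∑ i ∈ Icc 1 N, (1 / 2 : ℝ) ^ i) * B := by rw [← sum_mul, ← mul_sum]
    _ ≤ 2 ^ 13 * (∑ i ∈ range (N + 1), (1 / 2 : ℝ) ^ i) * B := by
        gcongr
        exact fun i hi => by grind
    _ ≤ 2 ^ 13 * 2 * B := by
        gcongr
        exact sum_geometric_two_le _
    _ = 2 ^ 14 * r ^ (-(1 / 2) : ℝ) * logb 2 r ^ 2 := by ring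
end

section
/- There exists a constant C > 0 such that for every real number r ≥ 2, every integer c ≥ 1, and every positive integer N, with r_i = r^{2^{i−1}} and β_{ij} = (4/3)^{i−j} (log₂ r_{i+1})/(log₂ r_{j+1}) (where r_{0+1} = r): ∑_{i=1}^{N} r_i^{−1/2} · ( β_{i0} (log₂ r)^c + ∑_{j=0}^{i} β_{ij} log₂ r_{j+1} ) ≤ C · r^{−1/2} (log₂ r)^{c+1}. (This is the arithmetic content of the bound showing the total process debt of the algorithm is O((n/√r) log^{c+1} r).) -/
/-!
Write `L = log₂ r ≥ 1`. Since `log₂ r_{j+1} = 2^j L`, every product `β_{ij} log₂ r_{j+1}` equals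
`(4/3)^{i-j} 2^i L`, and `β_{i0} = (8/3)^i`; summing the geometric series over `j` bounds the
`i`-th bracket by `5 (8/3)^i L^{c+1}`. The weight `r_i^{-1/2} = r^{-1/2} (r^{2^{i-1}-1})^{-1/2}`
decays doubly exponentially, so it beats `(16/3)^i` by a uniform factor and leaves
`r^{-1/2} 2^{-i}`, whose sum over `i` is bounded.
-/

open Finset

/-- `β i j = (4/3)^(i-j) · log₂ r_{i+1} / log₂ r_{j+1}` (with `r_{0+1} = r_1 = r`). -/
noncomputable def beta (r : ℝ) (i j : ℕ) : ℝ :=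
  (4 / 3 : ℝ) ^ (i - j) * (Real.logb 2 (rseq r (i + 1)) / Real.logb 2 (rseq r (j + 1)))

open Real

lemma geom_sum_le_of_one_lt {K : Type*} [Field K] [LinearOrder K] [IsStrictOrderedRing K]
    {x : K} (hx : 1 < x) (n : ℕ) : ∑ i ∈ range n, x ^ i ≤ x ^ n / (x - 1) := by
  rw [geom_sum_eq hx.ne']
  gcongr
  linarith

lemma sum_range_four_thirds_pow_sub_le (i : ℕ) :
    ∑ j ∈ range (i + 1), (4 / 3 : ℝ) ^ (i - j) ≤ 4 * (4 / 3) ^ i := by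
  have hreflect := sum_range_reflect (fun j ↦ (4 / 3 : ℝ) ^ j) (i + 1)
  simp only [add_tsub_cancel_right] at hreflect
  rw [hreflect]
  calc ∑ j ∈ range (i + 1), (4 / 3 : ℝ) ^ j ≤ (4 / 3) ^ (i + 1) / (4 / 3 - 1) :=
        geom_sum_le_of_one_lt (by norm_num) _
    _ = 4 * (4 / 3) ^ i := by ring

lemma five_mul_le_eight_add_two_pow (k : ℕ) : 5 * k ≤ 8 + 2 ^ k := by
  induction k with
  | zero => norm_num
  | succ k ih =>
    rcases lt_or_ge k 3 with hk | hk
    · interval_cases k <;> norm_num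
    · have : 2 ^ 3 ≤ 2 ^ k := Nat.pow_le_pow_right (by norm_num) hk
      rw [pow_succ]
      omega

lemma sixteen_thirds_pow_le_mul_sqrt {x : ℝ} (hx : 2 ≤ x) (k : ℕ) :
    (16 / 3 : ℝ) ^ (k + 1) ≤ 128 * √(x ^ (2 ^ k - 1)) := by
  have hsq : ((16 / 3 : ℝ) ^ (k + 1)) ^ 2 ≤ (128 * √(x ^ (2 ^ k - 1))) ^ 2 := by
    have hexp : 5 * (k + 1) ≤ 14 + (2 ^ k - 1) := by
      have := five_mul_le_eight_add_two_pow k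
      have := Nat.one_le_two_pow (n := k)
      omega
    rw [mul_pow, sq_sqrt (by positivity), ← pow_mul, mul_comm (k + 1), pow_mul]
    calc ((16 / 3 : ℝ) ^ 2) ^ (k + 1) ≤ (2 ^ 5) ^ (k + 1) := by gcongr; norm_num
      _ = 2 ^ (5 * (k + 1)) := by rw [← pow_mul]
      _ ≤ 2 ^ (14 + (2 ^ k - 1)) := pow_le_pow_right₀ (by norm_num) hexp
      _ = 128 ^ 2 * 2 ^ (2 ^ k - 1) := by rw [pow_add]; norm_num
      _ ≤ 128 ^ 2 * x ^ (2 ^ k - 1) := by gcongr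
  exact (pow_le_pow_iff_left₀ (by positivity) (by positivity) two_ne_zero).mp hsq

lemma rpow_neg_half_eq_inv_sqrt {x : ℝ} (hx : 0 ≤ x) : x ^ (-(1 / 2) : ℝ) = (√x)⁻¹ := by
  rw [rpow_neg hx, sqrt_eq_rpow]

section rseq

variable {r : ℝ}

lemma rseq_succ (r : ℝ) (k : ℕ) : rseq r (k + 1) = r ^ 2 ^ k := by
  simp [rseq]

lemma logb_rseq_succ (r : ℝ) (k : ℕ) : logb 2 (rseq r (k + 1)) = 2 ^ k * logb 2 r := by
  rw [rseq_succ, logb_pow]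
  push_cast
  ring

lemma sqrt_rseq_succ (hr : 0 ≤ r) (k : ℕ) :
    √(rseq r (k + 1)) = √r * √(r ^ (2 ^ k - 1)) := by
  rw [← sqrt_mul hr, ← pow_succ', Nat.sub_add_cancel Nat.one_le_two_pow, rseq_succ]

lemma beta_mul_logb_rseq (hr : logb 2 r ≠ 0) (i j : ℕ) :
    beta r i j * logb 2 (rseq r (j + 1)) = (4 / 3) ^ (i - j) * 2 ^ i * logb 2 r := by
  rw [beta, logb_rseq_succ, logb_rseq_succ]
  field_simp

lemma beta_zero (hr : logb 2 r ≠ 0) (i : ℕ) : beta r i 0 = (8 / 3) ^ i := by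
  rw [beta, logb_rseq_succ, logb_rseq_succ]
  field_simp
  norm_num [← mul_pow]

lemma debt_bracket_le (hr : 2 ≤ r) (c i : ℕ) :
    beta r i 0 * logb 2 r ^ c + ∑ j ∈ range (i + 1), beta r i j * logb 2 (rseq r (j + 1)) ≤
      5 * (8 / 3) ^ i * logb 2 r ^ (c + 1) := by
  set L := logb 2 r
  have hL : 1 ≤ L := by
    simpa using logb_le_logb_of_le (b := 2) (by norm_num) (by norm_num) hr
  have hL0 : L ≠ 0 := by positivity
  have hsum : ∑ j ∈ range (i + 1), beta r i j * logb 2 (rseq r (j + 1)) =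
      2 ^ i * L * ∑ j ∈ range (i + 1), (4 / 3 : ℝ) ^ (i - j) := by
    rw [mul_sum]
    exact sum_congr rfl fun j _ ↦ by rw [beta_mul_logb_rseq hL0]; ring
  have hLc : L ^ c ≤ L ^ (c + 1) := pow_le_pow_right₀ hL c.le_succ
  have hL1 : L ≤ L ^ (c + 1) := le_self_pow₀ hL c.succ_ne_zero
  rw [beta_zero hL0, hsum]
  calc (8 / 3 : ℝ) ^ i * L ^ c + 2 ^ i * L * ∑ j ∈ range (i + 1), (4 / 3 : ℝ) ^ (i - j)
      ≤ (8 / 3) ^ i * L ^ (c + 1) + 2 ^ i * L ^ (c + 1) * (4 * (4 / 3) ^ i) := by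
        gcongr
        exact sum_range_four_thirds_pow_sub_le i
    _ = 5 * (8 / 3) ^ i * L ^ (c + 1) := by
        rw [show (8 / 3 : ℝ) ^ i = 2 ^ i * (4 / 3) ^ i by rw [← mul_pow]; norm_num]
        ring

lemma eight_thirds_pow_mul_rseq_rpow_le (hr : 2 ≤ r) (k : ℕ) :
    (8 / 3 : ℝ) ^ (k + 1) * rseq r (k + 1) ^ (-(1 / 2) : ℝ) ≤
      128 * (1 / 2) ^ (k + 1) * r ^ (-(1 / 2) : ℝ) := by
  have hr0 : 0 ≤ r := by linarith
  have hy : 0 < √(r ^ (2 ^ k - 1)) := sqrt_pos.2 (by positivity)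
  rw [rpow_neg_half_eq_inv_sqrt (by rw [rseq_succ]; positivity), rpow_neg_half_eq_inv_sqrt hr0,
    sqrt_rseq_succ hr0, mul_inv]
  calc (8 / 3 : ℝ) ^ (k + 1) * ((√r)⁻¹ * (√(r ^ (2 ^ k - 1)))⁻¹)
      = (1 / 2) ^ (k + 1) * ((16 / 3) ^ (k + 1) / √(r ^ (2 ^ k - 1))) * (√r)⁻¹ := by
        rw [show (8 / 3 : ℝ) ^ (k + 1) = (1 / 2) ^ (k + 1) * (16 / 3) ^ (k + 1) by
          rw [← mul_pow]; norm_num]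
        ring
    _ ≤ (1 / 2) ^ (k + 1) * 128 * (√r)⁻¹ := by
        gcongr
        rw [div_le_iff₀ hy]
        exact sixteen_thirds_pow_le_mul_sqrt hr k
    _ = 128 * (1 / 2) ^ (k + 1) * (√r)⁻¹ := by ring

lemma debt_summand_le (hr : 2 ≤ r) (c : ℕ) {i : ℕ} (hi : 1 ≤ i) :
    rseq r i ^ (-(1 / 2) : ℝ) *
        (beta r i 0 * logb 2 r ^ c +
          ∑ j ∈ range (i + 1), beta r i j * logb 2 (rseq r (j + 1))) ≤
      640 * (1 / 2) ^ i * r ^ (-(1 / 2) : ℝ) * logb 2 r ^ (c + 1) := by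
  obtain ⟨k, rfl⟩ : ∃ k, i = k + 1 := ⟨i - 1, by omega⟩
  have hw : 0 ≤ rseq r (k + 1) ^ (-(1 / 2) : ℝ) := rpow_nonneg (by rw [rseq_succ]; positivity) _
  have hL : 0 ≤ logb 2 r ^ (c + 1) := pow_nonneg (logb_nonneg (by norm_num) (by linarith)) _
  calc rseq r (k + 1) ^ (-(1 / 2) : ℝ) *
        (beta r (k + 1) 0 * logb 2 r ^ c +
          ∑ j ∈ range (k + 1 + 1), beta r (k + 1) j * logb 2 (rseq r (j + 1)))
      ≤ rseq r (k + 1) ^ (-(1 / 2) : ℝ) * (5 * (8 / 3) ^ (k + 1) * logb 2 r ^ (c + 1)) := by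
        gcongr
        exact debt_bracket_le hr c (k + 1)
    _ = 5 * logb 2 r ^ (c + 1) * ((8 / 3) ^ (k + 1) * rseq r (k + 1) ^ (-(1 / 2) : ℝ)) := by
        ring
    _ ≤ 5 * logb 2 r ^ (c + 1) * (128 * (1 / 2) ^ (k + 1) * r ^ (-(1 / 2) : ℝ)) := by
        exact mul_le_mul_of_nonneg_left (eight_thirds_pow_mul_rseq_rpow_le hr k) (by positivity)
    _ = 640 * (1 / 2) ^ (k + 1) * r ^ (-(1 / 2) : ℝ) * logb 2 r ^ (c + 1) := by ring

end rseq

lemma sum_Icc_one_half_pow_le_one (N : ℕ) : ∑ i ∈ Icc 1 N, (1 / 2 : ℝ) ^ i ≤ 1 := by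
  rw [← Ico_add_one_right_eq_Icc]
  exact (geom_sum_Ico_le_of_lt_one (by norm_num) (by norm_num)).trans_eq (by norm_num)

/-- The arithmetic content of the total process debt bound: there is a
universal constant `C` such that for every `r ≥ 2`, every `c ≥ 1` and every `N`,
`∑_{i=1}^{N} r_i^{-1/2} (β_{i0} (log₂ r)^c + ∑_{j=0}^{i} β_{ij} log₂ r_{j+1})`
is at most `C · r^{-1/2} (log₂ r)^{c+1}`. -/
theorem total_process_debt_bound :
    ∃ C : ℝ, 0 < C ∧ ∀ r : ℝ, 2 ≤ r → ∀ c : ℕ, 1 ≤ c → ∀ N : ℕ, 1 ≤ N →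
      ∑ i ∈ Finset.Icc 1 N,
          rseq r i ^ (-(1 / 2) : ℝ) *
            (beta r i 0 * (Real.logb 2 r) ^ c +
              ∑ j ∈ Finset.range (i + 1), beta r i j * Real.logb 2 (rseq r (j + 1))) ≤
        C * r ^ (-(1 / 2) : ℝ) * (Real.logb 2 r) ^ (c + 1) := by
  refine ⟨640, by norm_num, fun r hr c _ N _ ↦ ?_⟩
  have hM : 0 ≤ 640 * r ^ (-(1 / 2) : ℝ) * logb 2 r ^ (c + 1) := by
    have := logb_nonneg (b := 2) (by norm_num) (by linarith : 1 ≤ r)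
    positivity
  calc _ ≤ ∑ i ∈ Icc 1 N, (1 / 2 : ℝ) ^ i * (640 * r ^ (-(1 / 2) : ℝ) * logb 2 r ^ (c + 1)) :=
        sum_le_sum fun i hi ↦ (debt_summand_le hr c (mem_Icc.mp hi).1).trans_eq (by ring)
    _ = (∑ i ∈ Icc 1 N, (1 / 2 : ℝ) ^ i) * (640 * r ^ (-(1 / 2) : ℝ) * logb 2 r ^ (c + 1)) :=
        (sum_mul ..).symm
    _ ≤ 640 * r ^ (-(1 / 2) : ℝ) * logb 2 r ^ (c + 1) :=
        mul_le_of_le_one_left hM (sum_Icc_one_half_pow_le_one N)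
end
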